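/- arXiv:1810.00527 — 3 statements merged into one kernel-verified Lean document; each statement's English description precedes it below -/
import Mathlib

section
/- Let σ : ℕ → P be a switching signal with average dwell-time N_a > 0 and chatter bound N_0, i.e., the number of switches N_σ(k, k̲) on any interval [k̲, k) satisfies N_σ(k, k̲) ≤ N_0 + (k − k̲)/N_a. Suppose a sequence (v_k) of nonnegative reals satisfies v_{k+1} ≤ λ v_k (0 < λ < 1) at non-switching times and v_{k+1} ≤ μ λ v_k (μ ≥ 1) at switching times. If N_a ≥ ln μ / ln(ε/λ) for some ε ∈ (λ, 1), then v_k ≤ μ^{N_0} ε^k v_0 for all k ∈ ℕ. -/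
/-!
Unrolling the recursion gives `v k ≤ μ ^ N * lam ^ k * v 0`, where `N` is the number of switches
before `k`. The dwell-time bound `N ≤ N0 + k / Na` turns `μ ^ N` into `μ ^ N0 * (μ ^ Na⁻¹) ^ k`,
and the condition on `Na` says precisely that `μ ^ Na⁻¹ * lam ≤ ε`.
-/

open Finset Real

theorem le_pow_card_filter_mul_pow_mul {v : ℕ → ℝ} {s : ℕ → Prop} [DecidablePred s]
    {lam μ : ℝ} (hlam : 0 ≤ lam) (hμ : 0 ≤ μ)
    (hstay : ∀ k, ¬ s k → v (k + 1) ≤ lam * v k)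
    (hswitch : ∀ k, s k → v (k + 1) ≤ μ * (lam * v k)) (k : ℕ) :
    v k ≤ μ ^ #((range k).filter s) * lam ^ k * v 0 := by
  induction k with
  | zero => simp
  | succ k ih =>
    have hstep : lam * v k ≤ lam * (μ ^ #((range k).filter s) * lam ^ k * v 0) :=
      mul_le_mul_of_nonneg_left ih hlam
    rw [range_add_one, filter_insert]
    by_cases hk : s k
    · rw [if_pos hk, card_insert_of_notMem (by simp)]
      calc v (k + 1) ≤ μ * (lam * v k) := hswitch k hk
        _ ≤ μ * (lam * (μ ^ #((range k).filter s) * lam ^ k * v 0)) :=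
          mul_le_mul_of_nonneg_left hstep hμ
        _ = _ := by ring
    · rw [if_neg hk]
      calc v (k + 1) ≤ lam * v k := hstay k hk
        _ ≤ _ := hstep
        _ = _ := by ring

theorem rpow_inv_mul_le_of_log_div_log_le {lam μ ε Na : ℝ} (hlam : 0 < lam) (hε : lam < ε)
    (hμ : 0 < μ) (hNa : 0 < Na) (h : log μ / log (ε / lam) ≤ Na) :
    μ ^ Na⁻¹ * lam ≤ ε := by
  have hlog : 0 < log (ε / lam) := log_pos ((one_lt_div hlam).mpr hε)
  have hexp : log μ * Na⁻¹ ≤ log (ε / lam) := by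
    rw [← div_eq_mul_inv, div_le_iff₀ hNa, mul_comm]
    exact (div_le_iff₀ hlog).mp h
  have hroot : μ ^ Na⁻¹ ≤ ε / lam := by
    rw [rpow_def_of_pos hμ, ← exp_log (div_pos (hlam.trans hε) hlam)]
    exact exp_le_exp.mpr hexp
  exact (le_div_iff₀ hlam).mp hroot

theorem stmt7_general {P : Type*} [DecidableEq P] (σ : ℕ → P)
    (N0 Na : ℝ) (hNa : 0 < Na)
    (hdwell : ∀ kl k : ℕ, kl ≤ k →
      ((((Finset.Ico kl k).filter fun j => σ (j + 1) ≠ σ j).card : ℝ)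
        ≤ N0 + ((k : ℝ) - (kl : ℝ)) / Na))
    (v : ℕ → ℝ) (hv : ∀ k, 0 ≤ v k)
    (lam μ ε : ℝ) (hlam0 : 0 < lam)
    (hμ : 1 ≤ μ) (hε1 : lam < ε)
    (hrec1 : ∀ k, σ (k + 1) = σ k → v (k + 1) ≤ lam * v k)
    (hrec2 : ∀ k, σ (k + 1) ≠ σ k → v (k + 1) ≤ μ * (lam * v k))
    (hNabound : Na ≥ Real.log μ / Real.log (ε / lam)) :
    ∀ k : ℕ, v k ≤ Real.rpow μ N0 * ε ^ k * v 0 := by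
  intro k
  have hμ0 : 0 < μ := one_pos.trans_le hμ
  set N := ((range k).filter fun j => σ (j + 1) ≠ σ j).card
  have hbound : v k ≤ μ ^ N * lam ^ k * v 0 :=
    le_pow_card_filter_mul_pow_mul hlam0.le hμ0.le (fun j hj => hrec1 j (not_not.mp hj)) hrec2 k
  have hcount : (N : ℝ) ≤ N0 + k / Na := by
    have h := hdwell 0 k k.zero_le
    rwa [← range_eq_Ico, Nat.cast_zero, sub_zero] at h
  have hrate : μ ^ Na⁻¹ * lam ≤ ε :=
    rpow_inv_mul_le_of_log_div_log_le hlam0 hε1 hμ0 hNa hNabound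
  have hv0 := hv 0
  rw [rpow_eq_pow]
  calc v k ≤ μ ^ N * lam ^ k * v 0 := hbound
    _ ≤ μ ^ (N0 + k / Na) * lam ^ k * v 0 := by
      rw [← rpow_natCast]
      gcongr
    _ = μ ^ N0 * (μ ^ Na⁻¹ * lam) ^ k * v 0 := by
      rw [rpow_add hμ0, div_eq_mul_inv, mul_comm (k : ℝ), rpow_mul hμ0.le, rpow_natCast]
      ring
    _ ≤ μ ^ N0 * ε ^ k * v 0 := by gcongr

/-- average dwell-time bound — under the dwell-time condition
N_a ≥ ln μ / ln(ε/λ), Lyapunov values decay as v_k ≤ μ^{N_0} ε^k v_0. -/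
theorem stmt7 {P : Type*} [DecidableEq P] (σ : ℕ → P)
    (N0 Na : ℝ) (hNa : 0 < Na)
    (hdwell : ∀ kl k : ℕ, kl ≤ k →
      ((((Finset.Ico kl k).filter fun j => σ (j + 1) ≠ σ j).card : ℝ)
        ≤ N0 + ((k : ℝ) - (kl : ℝ)) / Na))
    (v : ℕ → ℝ) (hv : ∀ k, 0 ≤ v k)
    (lam μ ε : ℝ) (hlam0 : 0 < lam) (hlam1 : lam < 1)
    (hμ : 1 ≤ μ) (hε1 : lam < ε) (hε2 : ε < 1) (hN0 : 0 ≤ N0)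
    (hrec1 : ∀ k, σ (k + 1) = σ k → v (k + 1) ≤ lam * v k)
    (hrec2 : ∀ k, σ (k + 1) ≠ σ k → v (k + 1) ≤ μ * (lam * v k))
    (hNabound : Na ≥ Real.log μ / Real.log (ε / lam)) :
    ∀ k : ℕ, v k ≤ Real.rpow μ N0 * ε ^ k * v 0 :=
  stmt7_general σ N0 Na hNa hdwell v hv lam μ ε hlam0 hμ hε1 hrec1 hrec2 hNabound
end

section
/- Let 0 < λ < 1, μ ≥ 1, ε ∈ (λ, 1), and define N̄_a = ln μ / ln(ε/λ). Then N̄_a ≥ 0, and for any N_a ≥ N̄_a and any k̲ ≤ k with number of switches N ≤ N_0 + (k − k̲)/N_a, one has μ^N λ^{k − k̲} ≤ μ^{N_0} ε^{k − k̲}. -/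
/-! Taking logarithms, `μ ^ N * λ ^ m ≤ μ ^ N₀ * ε ^ m` becomes
`(N - N₀) log μ ≤ m log (ε / λ)`. Since `log μ ≥ 0`, the dwell-time condition gives
`(N - N₀) log μ ≤ (m / N_a) log μ`, and `N_a ≥ log μ / log (ε / λ)` bounds this by `m log (ε / λ)`. -/

open Real

lemma mul_le_mul_of_le_div_of_div_le {a L Na s t : ℝ} (ha : 0 ≤ a) (hL : 0 < L)
    (hNa : a / L ≤ Na) (ht : 0 ≤ t) (hs : s ≤ t / Na) : s * a ≤ t * L := by
  rcases (div_nonneg ha hL.le |>.trans hNa).eq_or_lt with hNa0 | hNa_pos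
  · have ha0 : a ≤ 0 := by rwa [← hNa0, div_le_iff₀ hL, zero_mul] at hNa
    simp [le_antisymm ha0 ha, mul_nonneg ht hL.le]
  · have haL : a ≤ Na * L := (div_le_iff₀ hL).1 hNa
    calc s * a ≤ t / Na * a := mul_le_mul_of_nonneg_right hs ha
      _ ≤ t / Na * (Na * L) := mul_le_mul_of_nonneg_left haL (div_nonneg ht hNa_pos.le)
      _ = t * L := by field_simp

lemma pow_mul_pow_le_rpow_mul_pow_of_le_dwell {lam μ ε N0 Na : ℝ} (hlam0 : 0 < lam)
    (hμ : 1 ≤ μ) (hε : lam < ε) (hNa : log μ / log (ε / lam) ≤ Na) {m N : ℕ}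
    (hN : (N : ℝ) ≤ N0 + m / Na) :
    μ ^ N * lam ^ m ≤ μ ^ N0 * ε ^ m := by
  have hμ0 : 0 < μ := one_pos.trans_le hμ
  have hε0 : 0 < ε := hlam0.trans hε
  have hlogε : 0 < log (ε / lam) := log_pos ((one_lt_div hlam0).2 hε)
  have key : ((N : ℝ) - N0) * log μ ≤ m * log (ε / lam) :=
    mul_le_mul_of_le_div_of_div_le (log_nonneg hμ) hlogε hNa m.cast_nonneg (by linarith)
  rw [← log_le_log_iff (by positivity) (by positivity), log_mul (by positivity) (by positivity),
    log_mul (by positivity) (by positivity), log_rpow hμ0]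
  simp only [log_pow]
  rw [log_div hε0.ne' hlam0.ne'] at key
  linarith

theorem stmt13_general (lam μ ε N0 Na : ℝ)
    (hlam0 : 0 < lam) (hμ : 1 ≤ μ)
    (hε1 : lam < ε)
    (hNabound : Na ≥ Real.log μ / Real.log (ε / lam)) :
    0 ≤ Real.log μ / Real.log (ε / lam) ∧
    ∀ (kl k N : ℕ), kl ≤ k → ((N : ℝ) ≤ N0 + ((k : ℝ) - (kl : ℝ)) / Na) →
      μ ^ N * lam ^ (k - kl) ≤ Real.rpow μ N0 * ε ^ (k - kl) := by
  refine ⟨div_nonneg (log_nonneg hμ) (log_pos ((one_lt_div hlam0).2 hε1)).le, ?_⟩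
  intro kl k N hkl hN
  rw [← Nat.cast_sub hkl] at hN
  exact pow_mul_pow_le_rpow_mul_pow_of_le_dwell hlam0 hμ hε1 hNabound hN

/-- arithmetic core of the average dwell-time theorem. -/
theorem stmt13 (lam μ ε N0 Na : ℝ)
    (hlam0 : 0 < lam) (hlam1 : lam < 1) (hμ : 1 ≤ μ)
    (hε1 : lam < ε) (hε2 : ε < 1) (hN0 : 0 ≤ N0) (hNa : 0 < Na)
    (hNabound : Na ≥ Real.log μ / Real.log (ε / lam)) :
    0 ≤ Real.log μ / Real.log (ε / lam) ∧
    ∀ (kl k N : ℕ), kl ≤ k → ((N : ℝ) ≤ N0 + ((k : ℝ) - (kl : ℝ)) / Na) →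
      μ ^ N * lam ^ (k - kl) ≤ Real.rpow μ N0 * ε ^ (k - kl) :=
  stmt13_general lam μ ε N0 Na hlam0 hμ hε1 hNabound
end

section
/- Let (v_k) be nonnegative reals, 0 < λ < 1, μ ≥ 1, c ≥ 0, and suppose v_{k+1} ≤ λ v_k + c at non-switching times and v_{k+1} ≤ μ(λ v_k + c) at switching times, where the switching signal has at most N_0 + (k − k̲)/N_a switches in [k̲, k) with N_a ≥ ln μ / ln(ε/λ) for some ε ∈ (λ, 1). Then v_k ≤ μ^{N_0} ε^k v_0 + C c for all k, where C is a constant depending only on λ, μ, ε, N_0. -/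
/-!
Writing `a_k ∈ {1, μ}` for the jump factor at step `k`, the recursion `v_{k+1} ≤ a_k (λ v_k + c)`
unrolls to `v_k ≤ (∏_{i<k} a_i) λ^k v_0 + c ∑_{j<k} (∏_{j≤i<k} a_i) λ^{k-1-j}`. The product over
`[j, k)` is `μ` to the number of switches there, and the dwell-time condition
`N_a ≥ ln μ / ln(ε/λ)` turns it into at most `μ^{N_0} (ε/λ)^{k-j}`. Each term of the sum is then
at most `μ^{N_0} (ε/λ) ε^{k-1-j}`, and the geometric series gives `C = μ^{N_0} ε / (λ (1 - ε))`.
-/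

open Finset

section AffineRecursion

variable {a v : ℕ → ℝ} {lam c : ℝ}

theorem le_prod_mul_add_sum_of_le_mul_affine (ha : ∀ k, 0 ≤ a k) (hlam : 0 ≤ lam)
    (h : ∀ k, v (k + 1) ≤ a k * (lam * v k + c)) (k : ℕ) :
    v k ≤ (∏ i ∈ range k, a i) * lam ^ k * v 0 +
      c * ∑ j ∈ range k, (∏ i ∈ Ico j k, a i) * lam ^ (k - 1 - j) := by
  induction k with
  | zero => simp
  | succ k ih =>
    have hsum : ∑ j ∈ range (k + 1), (∏ i ∈ Ico j (k + 1), a i) * lam ^ (k + 1 - 1 - j) =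
        a k * (lam * ∑ j ∈ range k, (∏ i ∈ Ico j k, a i) * lam ^ (k - 1 - j) + 1) := by
      rw [sum_range_succ, mul_add, mul_sum, mul_sum, Nat.add_sub_cancel, Nat.sub_self,
        Nat.Ico_succ_singleton, prod_singleton, pow_zero, mul_one]
      congr 1
      refine sum_congr rfl fun j hj => ?_
      rw [prod_Ico_succ_top (mem_range.1 hj).le,
        show k - j = k - 1 - j + 1 by have := mem_range.1 hj; omega, pow_succ]
      ring
    calc v (k + 1) ≤ a k * (lam * v k + c) := h k
      _ ≤ a k * (lam * ((∏ i ∈ range k, a i) * lam ^ k * v 0 +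
            c * ∑ j ∈ range k, (∏ i ∈ Ico j k, a i) * lam ^ (k - 1 - j)) + c) := by
        gcongr
        exact ha k
      _ = _ := by rw [prod_range_succ, hsum, pow_succ]; ring

theorem le_of_le_mul_affine_of_prod_le {M ε : ℝ} (ha : ∀ k, 0 ≤ a k) (hlam : 0 < lam)
    (hε0 : 0 ≤ ε) (hε1 : ε < 1) (hc : 0 ≤ c) (hv0 : 0 ≤ v 0)
    (h : ∀ k, v (k + 1) ≤ a k * (lam * v k + c))
    (hprod : ∀ j k, j ≤ k → ∏ i ∈ Ico j k, a i ≤ M * (ε / lam) ^ (k - j)) (k : ℕ) :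
    v k ≤ M * ε ^ k * v 0 + M * (ε / lam) / (1 - ε) * c := by
  have hM : 0 ≤ M := by
    have : (1 : ℝ) ≤ M := by simpa using hprod 0 0 le_rfl
    linarith
  have hinit : (∏ i ∈ range k, a i) * lam ^ k ≤ M * ε ^ k := by
    calc (∏ i ∈ range k, a i) * lam ^ k ≤ M * (ε / lam) ^ k * lam ^ k := by
          refine mul_le_mul_of_nonneg_right ?_ (pow_nonneg hlam.le k)
          simpa only [range_eq_Ico, Nat.sub_zero] using hprod 0 k k.zero_le
      _ = M * ε ^ k := by rw [mul_assoc, ← mul_pow, div_mul_cancel₀ _ hlam.ne']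
  have hterm : ∀ j ∈ range k,
      (∏ i ∈ Ico j k, a i) * lam ^ (k - 1 - j) ≤ M * (ε / lam) * ε ^ (k - 1 - j) := by
    intro j hj
    calc (∏ i ∈ Ico j k, a i) * lam ^ (k - 1 - j)
        ≤ M * (ε / lam) ^ (k - 1 - j + 1) * lam ^ (k - 1 - j) := by
          refine mul_le_mul_of_nonneg_right ?_ (pow_nonneg hlam.le _)
          rw [show k - 1 - j + 1 = k - j by have := mem_range.1 hj; omega]
          exact hprod j k (mem_range.1 hj).le
      _ = M * (ε / lam) * ε ^ (k - 1 - j) := by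
        rw [pow_succ, ← div_mul_cancel₀ ε hlam.ne', mul_pow, mul_div_cancel_right₀ _ hlam.ne']
        ring
  have hsum : ∑ j ∈ range k, (∏ i ∈ Ico j k, a i) * lam ^ (k - 1 - j) ≤
      M * (ε / lam) / (1 - ε) := by
    calc ∑ j ∈ range k, (∏ i ∈ Ico j k, a i) * lam ^ (k - 1 - j)
        ≤ M * (ε / lam) * ∑ j ∈ range k, ε ^ (k - 1 - j) := by
          rw [mul_sum]; exact sum_le_sum hterm
      _ ≤ M * (ε / lam) * (1 / (1 - ε)) := by
        rw [sum_range_reflect (ε ^ ·) k, range_eq_Ico, ← pow_zero ε]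
        gcongr
        exact geom_sum_Ico_le_of_lt_one hε0 hε1
      _ = M * (ε / lam) / (1 - ε) := by ring
  calc v k ≤ (∏ i ∈ range k, a i) * lam ^ k * v 0 +
        c * ∑ j ∈ range k, (∏ i ∈ Ico j k, a i) * lam ^ (k - 1 - j) :=
        le_prod_mul_add_sum_of_le_mul_affine ha hlam.le h k
    _ ≤ M * ε ^ k * v 0 + c * (M * (ε / lam) / (1 - ε)) := by gcongr
    _ = M * ε ^ k * v 0 + M * (ε / lam) / (1 - ε) * c := by ring

end AffineRecursion

theorem rpow_le_rpow_mul_pow_of_le_add_div {μ ρ N0 Na n : ℝ} {m : ℕ} (hμ : 1 ≤ μ)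
    (hρ : 1 < ρ) (hNa : 0 < Na) (hNaρ : Real.log μ / Real.log ρ ≤ Na)
    (hn : n ≤ N0 + m / Na) : μ ^ n ≤ μ ^ N0 * ρ ^ m := by
  have hμ0 : 0 < μ := by linarith
  have hlog : Real.log μ / Na ≤ Real.log ρ := by
    rw [div_le_iff₀ (Real.log_pos hρ)] at hNaρ
    rw [div_le_iff₀ hNa]
    linarith
  have hgrowth : μ ^ ((m : ℝ) / Na) ≤ ρ ^ m := by
    rw [Real.rpow_def_of_pos hμ0, ← Real.rpow_natCast, Real.rpow_def_of_pos (by linarith)]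
    refine Real.exp_le_exp.2 ?_
    calc Real.log μ * (m / Na) = Real.log μ / Na * m := by ring
      _ ≤ Real.log ρ * m := by gcongr
  calc μ ^ n ≤ μ ^ (N0 + m / Na) := Real.rpow_le_rpow_of_exponent_le hμ hn
    _ = μ ^ N0 * μ ^ ((m : ℝ) / Na) := Real.rpow_add hμ0 _ _
    _ ≤ μ ^ N0 * ρ ^ m := by gcongr

theorem stmt14_general {P : Type*} [DecidableEq P]
    (lam μ ε N0 Na c : ℝ)
    (hlam0 : 0 < lam) (hμ : 1 ≤ μ)
    (hε1 : lam < ε) (hε2 : ε < 1) (hNa : 0 < Na)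
    (hc : 0 ≤ c)
    (hNabound : Na ≥ Real.log μ / Real.log (ε / lam)) :
    ∃ C : ℝ, 0 ≤ C ∧
      ∀ (σ : ℕ → P) (v : ℕ → ℝ),
        (∀ k, 0 ≤ v k) →
        (∀ kl k : ℕ, kl ≤ k →
          ((((Finset.Ico kl k).filter fun j => σ (j + 1) ≠ σ j).card : ℝ)
            ≤ N0 + ((k : ℝ) - (kl : ℝ)) / Na)) →
        (∀ k, σ (k + 1) = σ k → v (k + 1) ≤ lam * v k + c) →
        (∀ k, σ (k + 1) ≠ σ k → v (k + 1) ≤ μ * (lam * v k + c)) →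
        ∀ k : ℕ, v k ≤ Real.rpow μ N0 * ε ^ k * v 0 + C * c := by
  have hμ0 : 0 < μ := by linarith
  have hε0 : 0 < ε := by linarith
  refine ⟨μ ^ N0 * (ε / lam) / (1 - ε),
    div_nonneg (by positivity) (by linarith), fun σ v hv hdwell hstay hswitch => ?_⟩
  set a : ℕ → ℝ := fun k => if σ (k + 1) ≠ σ k then μ else 1
  have hrec : ∀ k, v (k + 1) ≤ a k * (lam * v k + c) := by
    intro k
    by_cases h : σ (k + 1) = σ k
    · simpa [a, h] using hstay k h
    · simpa [a, h] using hswitch k h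
  have hprod : ∀ j k, j ≤ k → ∏ i ∈ Ico j k, a i ≤ μ ^ N0 * (ε / lam) ^ (k - j) := by
    intro j k hjk
    rw [prod_ite, prod_const, prod_const_one, mul_one, ← Real.rpow_natCast]
    refine rpow_le_rpow_mul_pow_of_le_add_div hμ ((one_lt_div hlam0).2 hε1) hNa hNabound ?_
    simpa [Nat.cast_sub hjk] using hdwell j k hjk
  exact le_of_le_mul_affine_of_prod_le (fun k => by dsimp only [a]; split_ifs <;> linarith) hlam0 hε0.le hε2 hc
    (hv 0) hrec hprod

/-- perturbed average dwell-time estimate with ultimate bound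
v_k ≤ μ^{N_0} ε^k v_0 + C c. -/
theorem stmt14 {P : Type*} [DecidableEq P]
    (lam μ ε N0 Na c : ℝ)
    (hlam0 : 0 < lam) (hlam1 : lam < 1) (hμ : 1 ≤ μ)
    (hε1 : lam < ε) (hε2 : ε < 1) (hN0 : 0 ≤ N0) (hNa : 0 < Na)
    (hc : 0 ≤ c)
    (hNabound : Na ≥ Real.log μ / Real.log (ε / lam)) :
    ∃ C : ℝ, 0 ≤ C ∧
      ∀ (σ : ℕ → P) (v : ℕ → ℝ),
        (∀ k, 0 ≤ v k) →
        (∀ kl k : ℕ, kl ≤ k →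
          ((((Finset.Ico kl k).filter fun j => σ (j + 1) ≠ σ j).card : ℝ)
            ≤ N0 + ((k : ℝ) - (kl : ℝ)) / Na)) →
        (∀ k, σ (k + 1) = σ k → v (k + 1) ≤ lam * v k + c) →
        (∀ k, σ (k + 1) ≠ σ k → v (k + 1) ≤ μ * (lam * v k + c)) →
        ∀ k : ℕ, v k ≤ Real.rpow μ N0 * ε ^ k * v 0 + C * c :=
  stmt14_general lam μ ε N0 Na c hlam0 hμ hε1 hε2 hNa hc hNabound
end
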